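/- arXiv:2106.12150 — 2 statements merged into one kernel-verified Lean document; each statement's English description precedes it below -/
import Mathlib

section
/- Let (X,d) be a finite metric space, r : X → ℝ≥0 a radius function, and k a positive integer. Let S ⊆ X satisfy d(u,w) > r(u) + r(w) for all distinct u,w ∈ S. If there exists S* ⊆ X with |S*| ≤ k such that d(v,S*) ≤ r(v) for every v ∈ X, then |S| ≤ k. -/
/-- Packing argument underlying Plesník's 2-approximation for priority k-center:
if `S` is a set of points that are pairwise more than `r u + r w` apart, and some
set `S*` of at most `k` centers serves every point `v` within distance `r v`,
then `|S| ≤ k`. -/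
theorem stmt_0 {X : Type*} [MetricSpace X] [Fintype X]
    (r : X → ℝ) (hr : ∀ v, 0 ≤ r v) (k : ℕ) (hk : 0 < k)
    (S : Finset X)
    (hsep : ∀ u ∈ S, ∀ w ∈ S, u ≠ w → dist u w > r u + r w)
    (Sstar : Finset X) (hcard : Sstar.card ≤ k)
    (hcov : ∀ v : X, ∃ s ∈ Sstar, dist v s ≤ r v) :
    S.card ≤ k := by
  choose f hf hfd using hcov
  have : S.card ≤ Sstar.card := by
    apply Finset.card_le_card_of_injOn f (fun v _ => hf v)
    intro u hu w hw hfe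
    by_contra hne
    have := hsep u hu w hw hne
    have : dist u w ≤ r u + r w := by
      calc dist u w ≤ dist u (f u) + dist (f w) w := by
            rw [hfe]; exact dist_triangle_left u w (f w) |>.trans (by rw [dist_comm (f w) u])
        _ ≤ r u + r w := add_le_add (hfd u) (by rw [dist_comm]; exact hfd w)
    linarith
  omega
end

section
/- Let (X,d) be a finite metric space and R : X → ℝ≥0. Then there exist a set S ⊆ X and a family of sets D(u) ⊆ X for u ∈ S such that: (i) the sets {D(u) : u ∈ S} are pairwise disjoint and their union is X; (ii) u ∈ D(u) for every u ∈ S; (iii) d(u,v) > 2·max(R(u),R(v)) for all distinct u,v ∈ S; (iv) R(u) ≤ R(v) for every u ∈ S and v ∈ D(u); (v) d(u,v) ≤ 2·R(v) for every u ∈ S and v ∈ D(u). -/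
private lemma filter_aux {X : Type*} [MetricSpace X]
    (R : X → ℝ) (hR : ∀ v, 0 ≤ R v) :
    ∀ (A : Finset X),
    ∃ (S : Finset X) (D : X → Finset X),
      S ⊆ A ∧
      (∀ u ∈ S, D u ⊆ A) ∧
      (∀ u ∈ S, ∀ v ∈ S, u ≠ v → Disjoint (D u) (D v)) ∧
      (∀ x ∈ A, ∃ u ∈ S, x ∈ D u) ∧
      (∀ u ∈ S, u ∈ D u) ∧
      (∀ u ∈ S, ∀ v ∈ S, u ≠ v → dist u v > 2 * max (R u) (R v)) ∧
      (∀ u ∈ S, ∀ v ∈ D u, R u ≤ R v) ∧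
      (∀ u ∈ S, ∀ v ∈ D u, dist u v ≤ 2 * R v) := by
  intro A
  classical
  induction A using Finset.strongInduction with
  | _ A ih =>
  rcases A.eq_empty_or_nonempty with rfl | hne
  · exact ⟨∅, fun _ => ∅, by simp, by simp, by simp, by simp, by simp, by simp, by simp, by simp⟩
  · obtain ⟨u, huA, humin⟩ := A.exists_min_image R hne
    set C : Finset X := A.filter (fun v => dist u v ≤ 2 * R v) with hC
    have huC : u ∈ C := by
      simp only [hC, Finset.mem_filter, dist_self]
      exact ⟨huA, by linarith [hR u]⟩
    have hsub : A \ C ⊂ A :=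
      Finset.sdiff_ssubset (Finset.filter_subset _ _) ⟨u, huC⟩
    obtain ⟨S', D', hS'sub, hD'sub, hdisj, hcov, hmem, hfar, hmin, hnear⟩ := ih _ hsub
    have huS' : u ∉ S' := fun h => (Finset.mem_sdiff.mp (hS'sub h)).2 huC
    have hne' : ∀ a ∈ S', a ≠ u := by
      intro a ha h; exact huS' (h ▸ ha)
    refine ⟨insert u S', Function.update D' u C, ?_, ?_, ?_, ?_, ?_, ?_, ?_, ?_⟩
    · intro x hx
      rcases Finset.mem_insert.mp hx with h | hx
      · rw [h]; exact huA
      · exact Finset.sdiff_subset (hS'sub hx)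
    · intro x hx
      rcases Finset.mem_insert.mp hx with h | hx
      · rw [h, Function.update_self]; exact Finset.filter_subset _ _
      · rw [Function.update_of_ne (hne' x hx)]
        exact (hD'sub x hx).trans Finset.sdiff_subset
    · intro a ha b hb hab
      rcases Finset.mem_insert.mp ha with h1 | ha <;> rcases Finset.mem_insert.mp hb with h2 | hb
      · exact absurd (h1.trans h2.symm) hab
      · rw [h1, Function.update_self, Function.update_of_ne (hne' b hb)]
        exact Finset.disjoint_left.mpr fun x hx hx' =>
          (Finset.mem_sdiff.mp (hD'sub b hb hx')).2 hx
      · rw [h2, Function.update_self, Function.update_of_ne (hne' a ha)]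
        exact Finset.disjoint_right.mpr fun x hx hx' =>
          (Finset.mem_sdiff.mp (hD'sub a ha hx')).2 hx
      · rw [Function.update_of_ne (hne' a ha), Function.update_of_ne (hne' b hb)]
        exact hdisj a ha b hb hab
    · intro x hx
      by_cases hxC : x ∈ C
      · exact ⟨u, Finset.mem_insert_self _ _, by rw [Function.update_self]; exact hxC⟩
      · obtain ⟨w, hw, hxw⟩ := hcov x (Finset.mem_sdiff.mpr ⟨hx, hxC⟩)
        exact ⟨w, Finset.mem_insert_of_mem hw,
          by rw [Function.update_of_ne (hne' w hw)]; exact hxw⟩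
    · intro x hx
      rcases Finset.mem_insert.mp hx with h | hx
      · rw [h, Function.update_self]; exact h ▸ huC
      · rw [Function.update_of_ne (hne' x hx)]; exact hmem x hx
    · have key : ∀ c ∈ S', dist u c > 2 * max (R u) (R c) := by
        intro c hc
        have hcA := Finset.mem_sdiff.mp (hS'sub hc)
        have : ¬ dist u c ≤ 2 * R c := fun h => hcA.2 (Finset.mem_filter.mpr ⟨hcA.1, h⟩)
        rw [max_eq_right (humin c hcA.1)]
        linarith
      intro a ha b hb hab
      rcases Finset.mem_insert.mp ha with h1 | ha <;> rcases Finset.mem_insert.mp hb with h2 | hb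
      · exact absurd (h1.trans h2.symm) hab
      · rw [h1]; exact key b hb
      · rw [h2, dist_comm, max_comm]; exact key a ha
      · exact hfar a ha b hb hab
    · intro a ha v hv
      rcases Finset.mem_insert.mp ha with h | ha
      · rw [h, Function.update_self] at hv
        rw [h]; exact humin v (Finset.mem_filter.mp hv).1
      · rw [Function.update_of_ne (hne' a ha)] at hv
        exact hmin a ha v hv
    · intro a ha v hv
      rcases Finset.mem_insert.mp ha with h | ha
      · rw [h, Function.update_self] at hv
        rw [h]; exact (Finset.mem_filter.mp hv).2
      · rw [Function.update_of_ne (hne' a ha)] at hv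
        exact hnear a ha v hv

/-- Existence of the output of the greedy Filter routine (Algorithm 1),
satisfying the properties of Fact 2.5: the clusters `D u` partition `X`,
representatives are far apart, and each point is assigned to a nearby
representative of smaller or equal radius. -/
theorem stmt_4 {X : Type*} [MetricSpace X] [Fintype X]
    (R : X → ℝ) (hR : ∀ v, 0 ≤ R v) :
    ∃ (S : Finset X) (D : X → Finset X),
      (∀ u ∈ S, ∀ v ∈ S, u ≠ v → Disjoint (D u) (D v)) ∧
      (∀ x : X, ∃ u ∈ S, x ∈ D u) ∧
      (∀ u ∈ S, u ∈ D u) ∧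
      (∀ u ∈ S, ∀ v ∈ S, u ≠ v → dist u v > 2 * max (R u) (R v)) ∧
      (∀ u ∈ S, ∀ v ∈ D u, R u ≤ R v) ∧
      (∀ u ∈ S, ∀ v ∈ D u, dist u v ≤ 2 * R v) := by
  obtain ⟨S, D, _, _, hdisj, hcov, hmem, hfar, hmin, hnear⟩ :=
    filter_aux R hR (Finset.univ : Finset X)
  exact ⟨S, D, hdisj, fun x => hcov x (Finset.mem_univ x), hmem, hfar, hmin, hnear⟩
end
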